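/- arXiv:1107.1763 — 2 statements merged into one kernel-verified Lean document; each statement's English description precedes it below -/
import Mathlib

section
/- Let θ : ℝ^n → ℝ be a Schwartz-class solution of the stationary nonlinear wave equation -Δθ + g(θ) = 0 on ℝ^n. Then the Derrick–Pohozhaev identity holds: (2 - n) · (1/2)∫_{ℝ^n} |∇θ(x)|² dx = n ∫_{ℝ^n} G(θ(x)) dx. -/
open MeasureTheory

/-- Partial derivative of `f` in the `j`-th coordinate direction. -/
noncomputable def pderiv' {n : ℕ} {E : Type*} [NormedAddCommGroup E] [NormedSpace ℝ E]
    (j : Fin n) (f : (Fin n → ℝ) → E) (x : Fin n → ℝ) : E :=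
  fderiv ℝ f x (Pi.single j 1)

/-- Laplacian: sum of the second partial derivatives. -/
noncomputable def laplacian' {n : ℕ} {E : Type*} [NormedAddCommGroup E] [NormedSpace ℝ E]
    (f : (Fin n → ℝ) → E) (x : Fin n → ℝ) : E :=
  ∑ j : Fin n, pderiv' j (pderiv' j f) x

namespace PohozaevAux

open SchwartzMap

lemma schwartz_hasTemperateGrowth {E F : Type*} [NormedAddCommGroup E] [NormedSpace ℝ E]
    [NormedAddCommGroup F] [NormedSpace ℝ F] (f : 𝓢(E, F)) :
    Function.HasTemperateGrowth ⇑f :=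
  ⟨f.smooth', fun k ↦ ⟨0, SchwartzMap.seminorm ℝ 0 k f, fun x ↦ by
    simpa using SchwartzMap.norm_iteratedFDeriv_le_seminorm ℝ f k x⟩⟩

variable {n : ℕ}

/-- Pointwise product of Schwartz functions. -/
noncomputable def mulS (f g : 𝓢((Fin n → ℝ), ℝ)) : 𝓢((Fin n → ℝ), ℝ) :=
  SchwartzMap.bilinLeftCLM (ContinuousLinearMap.mul ℝ ℝ) (schwartz_hasTemperateGrowth g) f

@[simp] lemma mulS_apply (f g : 𝓢((Fin n → ℝ), ℝ)) (x : Fin n → ℝ) :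
    mulS f g x = f x * g x := rfl

/-- Multiplication by the `i`-th coordinate. -/
noncomputable def xmulS (i : Fin n) (f : 𝓢((Fin n → ℝ), ℝ)) : 𝓢((Fin n → ℝ), ℝ) :=
  SchwartzMap.bilinLeftCLM (ContinuousLinearMap.mul ℝ ℝ)
    (ContinuousLinearMap.proj (R := ℝ) (φ := fun _ : Fin n ↦ ℝ) i).hasTemperateGrowth f

@[simp] lemma xmulS_apply (i : Fin n) (f : 𝓢((Fin n → ℝ), ℝ)) (x : Fin n → ℝ) :
    xmulS i f x = f x * x i := rfl

/-- The partial derivative in direction `i` as a Schwartz map. -/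
noncomputable def Pd (i : Fin n) (f : 𝓢((Fin n → ℝ), ℝ)) : 𝓢((Fin n → ℝ), ℝ) :=
  LineDeriv.lineDerivOpCLM ℝ 𝓢((Fin n → ℝ), ℝ) (Pi.single i 1 : Fin n → ℝ) f

@[simp] lemma Pd_apply (i : Fin n) (f : 𝓢((Fin n → ℝ), ℝ)) (x : Fin n → ℝ) :
    Pd i f x = fderiv ℝ f x (Pi.single i 1) := rfl

/-- The fundamental lemma: the integral of a partial derivative of an integrable `C¹`
function with integrable derivative vanishes. -/
lemma integral_pderiv_eq_zero (f : (Fin n → ℝ) → ℝ) (v : Fin n → ℝ)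
    (hd : Differentiable ℝ f)
    (hc : Continuous fun x ↦ fderiv ℝ f x v)
    (h1 : Integrable f)
    (h2 : Integrable fun x ↦ fderiv ℝ f x v) :
    ∫ x, fderiv ℝ f x v = 0 := by
  set D : (Fin n → ℝ) → ℝ := fun x ↦ fderiv ℝ f x v with hD
  have key : ∀ x, f (x + v) - f x = ∫ s in Set.Ioc (0:ℝ) 1, D (x + s • v) := by
    intro x
    have hder : ∀ s : ℝ, HasDerivAt (fun t : ℝ ↦ f (x + t • v)) (D (x + s • v)) s := by
      intro s
      have h₁ : HasDerivAt (fun t : ℝ ↦ x + t • v) v s := by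
        simpa using ((hasDerivAt_id s).smul_const v).const_add x
      exact (hd (x + s • v)).hasFDerivAt.comp_hasDerivAt s h₁
    have hcont : Continuous fun s : ℝ ↦ D (x + s • v) := by
      exact hc.comp (by continuity)
    have := intervalIntegral.integral_eq_sub_of_hasDerivAt (fun s _ ↦ hder s)
      (hcont.intervalIntegrable 0 1)
    rw [← intervalIntegral.integral_of_le zero_le_one]
    simpa using this.symm
  have htrans : (∫ x, (f (x + v) - f x)) = 0 := by
    rw [integral_sub (h1.comp_add_right v) h1]
    rw [integral_add_right_eq_self f v]
    ring
  have hmeas : AEStronglyMeasurable (fun p : ℝ × (Fin n → ℝ) ↦ D (p.2 + p.1 • v))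
      ((volume.restrict (Set.Ioc (0:ℝ) 1)).prod volume) :=
    (hc.comp (continuous_snd.add (continuous_fst.smul continuous_const))).aestronglyMeasurable
  have hint : Integrable (fun p : ℝ × (Fin n → ℝ) ↦ D (p.2 + p.1 • v))
      ((volume.restrict (Set.Ioc (0:ℝ) 1)).prod volume) := by
    rw [integrable_prod_iff hmeas]
    constructor
    · exact Filter.Eventually.of_forall fun s ↦ h2.comp_add_right (s • v)
    · have : (fun s : ℝ ↦ ∫ x, ‖D (x + s • v)‖) = fun _ : ℝ ↦ ∫ x, ‖D x‖ := by
        funext s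
        exact integral_add_right_eq_self (fun x ↦ ‖D x‖) (s • v)
      rw [this]
      exact integrableOn_const measure_Ioc_lt_top.ne
  have hswap := integral_integral_swap (f := fun (s : ℝ) (x : Fin n → ℝ) ↦ D (x + s • v))
    (μ := volume.restrict (Set.Ioc (0:ℝ) 1)) (ν := volume) hint
  have hfin : (∫ x, (f (x + v) - f x)) = ∫ x, fderiv ℝ f x v := by
    calc ∫ x, (f (x + v) - f x)
        = ∫ x, ∫ s in Set.Ioc (0:ℝ) 1, D (x + s • v) := by
          exact integral_congr_ae (Filter.Eventually.of_forall key)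
      _ = ∫ s in Set.Ioc (0:ℝ) 1, ∫ x, D (x + s • v) := hswap.symm
      _ = ∫ s in Set.Ioc (0:ℝ) 1, ∫ x, D x := by
          refine setIntegral_congr_fun measurableSet_Ioc fun s _ ↦ ?_
          exact integral_add_right_eq_self D (s • v)
      _ = ∫ x, fderiv ℝ f x v := by
          simp [Measure.restrict_apply, hD]
  rw [← hfin, htrans]

lemma schwartz_integral_pderiv (f : 𝓢((Fin n → ℝ), ℝ)) (v : Fin n → ℝ) :
    ∫ x, fderiv ℝ f x v = 0 := by
  refine integral_pderiv_eq_zero f v f.differentiable ?_ f.integrable ?_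
  · exact (LineDeriv.lineDerivOpCLM ℝ 𝓢((Fin n → ℝ), ℝ) v f).continuous
  · exact (LineDeriv.lineDerivOpCLM ℝ 𝓢((Fin n → ℝ), ℝ) v f).integrable

lemma intg_xmul (i : Fin n) (u : 𝓢((Fin n → ℝ), ℝ)) :
    Integrable (fun x : Fin n → ℝ ↦ x i * u x) volume :=
  (xmulS i u).integrable.congr (Filter.Eventually.of_forall fun x ↦ mul_comm _ _)

lemma intg1 (i : Fin n) (u w : 𝓢((Fin n → ℝ), ℝ)) :
    Integrable (fun x : Fin n → ℝ ↦ x i * (u x * w x)) volume :=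
  intg_xmul i (mulS u w)

lemma proj_differentiableAt (i : Fin n) (x : Fin n → ℝ) :
    DifferentiableAt ℝ (fun y : Fin n → ℝ ↦ y i) x :=
  (ContinuousLinearMap.proj (R := ℝ) (φ := fun _ : Fin n ↦ ℝ) i).differentiableAt

lemma fderiv_coord_apply (i : Fin n) (x v : Fin n → ℝ) :
    fderiv ℝ (fun y : Fin n → ℝ ↦ y i) x v = v i := by
  have hco : (fun y : Fin n → ℝ ↦ y i)
      = ⇑(ContinuousLinearMap.proj (R := ℝ) (φ := fun _ : Fin n ↦ ℝ) i) := rfl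
  rw [hco, ContinuousLinearMap.fderiv]
  rfl

/-- Derivative of a product of Schwartz functions. -/
lemma fderiv_mulS (u w : 𝓢((Fin n → ℝ), ℝ)) (x v : Fin n → ℝ) :
    fderiv ℝ (⇑(mulS u w)) x v = u x * fderiv ℝ w x v + w x * fderiv ℝ u x v := by
  have hco : ⇑(mulS u w) = fun y ↦ u y * w y := rfl
  rw [hco, fderiv_fun_mul u.differentiableAt w.differentiableAt]
  simp

/-- Integration by parts with a coordinate weight. -/
lemma keyIBP (h : 𝓢((Fin n → ℝ), ℝ)) (i j : Fin n) :
    ∫ x : Fin n → ℝ, x i * fderiv ℝ (⇑h) x (Pi.single j 1)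
      = -(if i = j then (1:ℝ) else 0) * ∫ x, h x := by
  have h0 := schwartz_integral_pderiv (xmulS i h) (Pi.single j 1)
  have hder : (fun x : Fin n → ℝ ↦ fderiv ℝ (⇑(xmulS i h)) x (Pi.single j 1))
      = fun x ↦ h x * (if i = j then (1:ℝ) else 0) + x i * fderiv ℝ (⇑h) x (Pi.single j 1) := by
    funext x
    have hco : ⇑(xmulS i h) = fun y : Fin n → ℝ ↦ h y * y i := rfl
    rw [hco, fderiv_fun_mul h.differentiableAt (proj_differentiableAt i x)]
    simp only [ContinuousLinearMap.add_apply, ContinuousLinearMap.coe_smul', Pi.smul_apply,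
      smul_eq_mul, fderiv_coord_apply i x, Pi.single_apply]
  rw [hder] at h0
  have hint2 : Integrable (fun x : Fin n → ℝ ↦ x i * fderiv ℝ (⇑h) x (Pi.single j 1)) volume :=
    intg_xmul i (LineDeriv.lineDerivOpCLM ℝ 𝓢((Fin n → ℝ), ℝ) (Pi.single j 1 : Fin n → ℝ) h)
  rw [integral_add (h.integrable.mul_const (if i = j then (1:ℝ) else 0)) hint2,
    integral_mul_const] at h0
  linarith [h0]

/-- Symmetry of second derivatives for Schwartz functions. -/
lemma Pd_comm (θ : 𝓢((Fin n → ℝ), ℝ)) (i j : Fin n) (x : Fin n → ℝ) :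
    Pd j (Pd i θ) x = Pd i (Pd j θ) x := by
  have hF : Differentiable ℝ (fderiv ℝ (⇑θ)) :=
    (θ.smooth'.fderiv_right (m := 1) (by norm_cast)).differentiable (by simp)
  have hkey : ∀ (v : Fin n → ℝ) (y : Fin n → ℝ),
      fderiv ℝ (fun z ↦ fderiv ℝ (⇑θ) z v) y = (ContinuousLinearMap.apply ℝ ℝ v).comp
        (fderiv ℝ (fderiv ℝ (⇑θ)) y) := by
    intro v y
    exact (((ContinuousLinearMap.apply ℝ ℝ v).hasFDerivAt).comp y (hF y).hasFDerivAt).fderiv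
  have hsym := second_derivative_symmetric (f := ⇑θ) (f' := fderiv ℝ (⇑θ))
    (f'' := fderiv ℝ (fderiv ℝ (⇑θ)) x) (fun y ↦ θ.differentiableAt.hasFDerivAt)
    (hF x).hasFDerivAt (Pi.single j 1) (Pi.single i 1)
  have e1 : Pd j (Pd i θ) x
      = fderiv ℝ (fun z ↦ fderiv ℝ (⇑θ) z (Pi.single i 1)) x (Pi.single j 1) := rfl
  have e2 : Pd i (Pd j θ) x
      = fderiv ℝ (fun z ↦ fderiv ℝ (⇑θ) z (Pi.single j 1)) x (Pi.single i 1) := rfl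
  rw [e1, e2, hkey, hkey]
  simpa using hsym

/-- Step 1: `∫ xᵢ u ∂ᵢu = -(1/2) ∫ u²`. -/
lemma step1 (u : 𝓢((Fin n → ℝ), ℝ)) (i : Fin n) :
    ∫ x : Fin n → ℝ, x i * (u x * Pd i u x) = -(1/2) * ∫ x, u x * u x := by
  have h0 := keyIBP (mulS u u) i i
  simp only [eq_self_iff_true, if_true] at h0
  have hrw : (fun x : Fin n → ℝ ↦ x i * fderiv ℝ (⇑(mulS u u)) x (Pi.single i 1))
      = fun x ↦ 2 * (x i * (u x * Pd i u x)) := by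
    funext x; rw [fderiv_mulS]; simp only [Pd_apply]; ring
  rw [hrw, integral_const_mul] at h0
  have hAu : (∫ x, mulS u u x) = ∫ x, u x * u x := by simp
  rw [hAu] at h0
  linarith [h0]

/-- Step 2: mixed integration by parts. -/
lemma step2 (θ : 𝓢((Fin n → ℝ), ℝ)) (i j : Fin n) :
    ∫ x : Fin n → ℝ, x i * (Pd i θ x * Pd j (Pd j θ) x)
      = (if i = j then -(∫ x : Fin n → ℝ, Pd j θ x * Pd j θ x) else 0)
        + (1/2) * ∫ x : Fin n → ℝ, Pd j θ x * Pd j θ x := by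
  have h0 := keyIBP (mulS (Pd i θ) (Pd j θ)) i j
  have hrw : (fun x : Fin n → ℝ ↦ x i * fderiv ℝ (⇑(mulS (Pd i θ) (Pd j θ))) x (Pi.single j 1))
      = fun x ↦ x i * (Pd i θ x * Pd j (Pd j θ) x) + x i * (Pd j θ x * Pd i (Pd j θ) x) := by
    funext x
    rw [fderiv_mulS]
    have : fderiv ℝ (⇑(Pd i θ)) x (Pi.single j 1) = Pd i (Pd j θ) x := Pd_comm θ i j x
    simp only [Pd_apply] at this ⊢
    rw [this]
    ring
  rw [hrw] at h0
  rw [integral_add (intg1 i (Pd i θ) (Pd j (Pd j θ))) (intg1 i (Pd j θ) (Pd i (Pd j θ)))] at h0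
  have h1 := step1 (Pd j θ) i
  have h2 : (∫ x, mulS (Pd i θ) (Pd j θ) x) = ∫ x : Fin n → ℝ, Pd i θ x * Pd j θ x := by simp
  rw [h2, h1] at h0
  by_cases hij : i = j
  · subst hij
    simp only [eq_self_iff_true, if_true] at h0 ⊢
    linarith [h0]
  · simp only [if_neg hij] at h0 ⊢
    linarith [h0]


lemma bound_of_deriv (φ φ' : ℝ → ℝ) (hd : ∀ s, HasDerivAt φ (φ' s) s)
    (hc : Continuous φ') (h0 : φ 0 = 0) (R : ℝ) :
    ∃ M : ℝ, 0 ≤ M ∧ ∀ s, |s| ≤ R → |φ s| ≤ M * |s| := by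
  obtain ⟨M, hM⟩ := (isCompact_Icc (a := -R) (b := R)).exists_bound_of_continuousOn
    hc.continuousOn
  refine ⟨max M 0, le_max_right _ _, fun s hs ↦ ?_⟩
  have heq : φ s = ∫ t in (0:ℝ)..s, φ' t := by
    rw [intervalIntegral.integral_eq_sub_of_hasDerivAt (fun t _ ↦ hd t)
      (hc.intervalIntegrable 0 s), h0, sub_zero]
  rw [heq]
  have hb := intervalIntegral.norm_integral_le_of_norm_le_const (C := max M 0)
    (f := φ') (a := 0) (b := s) ?_
  · simpa [Real.norm_eq_abs] using hb
  · intro u hu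
    have habs : u ∈ Set.Icc (-R) R := by
      rw [abs_le] at hs
      rcases Set.mem_uIoc.mp hu with h | h
      · exact ⟨by linarith [h.1, h.2, hs.1, hs.2], by linarith [h.1, h.2, hs.2]⟩
      · exact ⟨by linarith [h.1, h.2, hs.1], by linarith [h.1, h.2, hs.1, hs.2]⟩
    exact le_trans (hM u habs) (le_max_left _ _)

end PohozaevAux

open PohozaevAux

/-- Derrick–Pohozhaev identity for Schwartz-class solutions of
`-Δθ + g(θ) = 0` on `ℝ^n`:
`(2 - n) · (1/2)∫ |∇θ|² = n ∫ G(θ)`. -/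
theorem stmt_0 (n : ℕ) (hn : 1 ≤ n)
    (g : ℝ → ℝ) (hg : ContDiff ℝ (⊤ : ℕ∞) g) (hg0 : g 0 = 0)
    (G : ℝ → ℝ) (hG : ∀ s, G s = ∫ t in (0:ℝ)..s, g t)
    (θ : SchwartzMap (Fin n → ℝ) ℝ)
    (hθ : ∀ x, -laplacian' (⇑θ) x + g (θ x) = 0) :
    ((2 : ℝ) - n) * ((1/2) * ∫ x : Fin n → ℝ, ∑ j : Fin n, (pderiv' j (⇑θ) x)^2)
      = n * ∫ x : Fin n → ℝ, G (θ x) := by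
  classical
  -- basic facts about G and g
  have hGder : ∀ s, HasDerivAt G (g s) s := by
    intro s
    have h1 : HasDerivAt (fun u ↦ ∫ t in (0:ℝ)..u, g t) (g s) s :=
      intervalIntegral.integral_hasDerivAt_right (hg.continuous.intervalIntegrable 0 s)
        (hg.continuous.stronglyMeasurableAtFilter volume (nhds s)) hg.continuous.continuousAt
    have h2 : G = fun u ↦ ∫ t in (0:ℝ)..u, g t := funext hG
    rw [h2]; exact h1
  have hG0 : G 0 = 0 := by rw [hG]; simp
  have hGcont : Continuous G := by
    apply continuous_iff_continuousAt.2 fun s ↦ ((hGder s).differentiableAt).continuousAt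
  obtain ⟨R, hR⟩ : ∃ R, ∀ x, |θ x| ≤ R :=
    ⟨SchwartzMap.seminorm ℝ 0 0 θ, fun x ↦ by
      simpa [Real.norm_eq_abs] using SchwartzMap.norm_le_seminorm ℝ θ x⟩
  obtain ⟨M₁, hM₁0, hM₁⟩ := bound_of_deriv G g hGder hg.continuous hG0 R
  obtain ⟨M₂, hM₂0, hM₂⟩ := bound_of_deriv g (deriv g)
    (fun s ↦ ((hg.differentiable (by simp)) s).hasDerivAt) (hg.continuous_deriv (by simp)) hg0 R
  -- the PDE, rewritten with Schwartz derivatives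
  have hPDE : ∀ x, g (θ x) = ∑ j, Pd j (Pd j θ) x := by
    intro x
    have h1 := hθ x
    have h2 : laplacian' (⇑θ) x = ∑ j, Pd j (Pd j θ) x := rfl
    rw [h2] at h1
    linarith [h1]
  -- integrability facts
  have hGθint : Integrable (fun x : Fin n → ℝ ↦ G (θ x)) volume := by
    refine (θ.integrable.norm.const_mul M₁).mono'
      ((hGcont.comp θ.continuous).aestronglyMeasurable) ?_
    refine Filter.Eventually.of_forall fun x ↦ ?_
    simpa [Real.norm_eq_abs] using hM₁ (θ x) (hR x)
  -- step 3 : Pohozaev multiplier identity for the potential term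
  have step3 : ∀ i : Fin n, (∫ x : Fin n → ℝ, G (θ x))
      + (∫ x : Fin n → ℝ, x i * (g (θ x) * Pd i θ x)) = 0 := by
    intro i
    have hgpart : Integrable (fun x : Fin n → ℝ ↦ x i * (g (θ x) * Pd i θ x)) volume := by
      refine ((intg1 i θ (Pd i θ)).norm.const_mul M₂).mono'
        (((continuous_apply i).mul ((hg.continuous.comp θ.continuous).mul
          (Pd i θ).continuous)).aestronglyMeasurable) ?_
      refine Filter.Eventually.of_forall fun x ↦ ?_
      have hb := hM₂ (θ x) (hR x)
      calc ‖x i * (g (θ x) * Pd i θ x)‖ = |x i| * (|g (θ x)| * |Pd i θ x|) := by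
            rw [Real.norm_eq_abs, abs_mul, abs_mul]
        _ ≤ |x i| * ((M₂ * |θ x|) * |Pd i θ x|) := by gcongr
        _ = M₂ * ‖x i * (θ x * Pd i θ x)‖ := by
            rw [Real.norm_eq_abs, abs_mul, abs_mul]; ring
    set f : (Fin n → ℝ) → ℝ := fun x ↦ x i * G (θ x) with hfdef
    have hder : ∀ x : Fin n → ℝ, HasFDerivAt f
        ((x i) • ((g (θ x)) • fderiv ℝ (⇑θ) x) + (G (θ x)) •
          (ContinuousLinearMap.proj (R := ℝ) (φ := fun _ : Fin n ↦ ℝ) i)) x := by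
      intro x
      have h1 : HasFDerivAt (fun y : Fin n → ℝ ↦ y i)
          (ContinuousLinearMap.proj (R := ℝ) (φ := fun _ : Fin n ↦ ℝ) i) x :=
        (ContinuousLinearMap.proj (R := ℝ) (φ := fun _ : Fin n ↦ ℝ) i).hasFDerivAt
      have h2 : HasFDerivAt (fun y : Fin n → ℝ ↦ G (θ y)) ((g (θ x)) • fderiv ℝ (⇑θ) x) x :=
        (hGder (θ x)).comp_hasFDerivAt x θ.differentiableAt.hasFDerivAt
      exact h1.mul h2
    have hfd : (fun x : Fin n → ℝ ↦ fderiv ℝ f x (Pi.single i 1))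
        = fun x ↦ G (θ x) + x i * (g (θ x) * Pd i θ x) := by
      funext x
      rw [(hder x).fderiv]
      have hθd : fderiv ℝ (⇑θ) x (Pi.single i 1) = Pd i θ x := rfl
      simp only [ContinuousLinearMap.add_apply, ContinuousLinearMap.coe_smul', Pi.smul_apply,
        smul_eq_mul, ContinuousLinearMap.proj_apply, Pi.single_eq_same, hθd]
      ring
    have hintf : Integrable f volume := by
      refine ((intg_xmul i θ).norm.const_mul M₁).mono'
        (((continuous_apply i).mul (hGcont.comp θ.continuous)).aestronglyMeasurable) ?_
      refine Filter.Eventually.of_forall fun x ↦ ?_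
      have hb := hM₁ (θ x) (hR x)
      calc ‖x i * G (θ x)‖ = |x i| * |G (θ x)| := by rw [Real.norm_eq_abs, abs_mul]
        _ ≤ |x i| * (M₁ * |θ x|) := by gcongr
        _ = M₁ * ‖x i * θ x‖ := by rw [Real.norm_eq_abs, abs_mul]; ring
    have hintd : Integrable (fun x : Fin n → ℝ ↦ fderiv ℝ f x (Pi.single i 1)) volume := by
      rw [hfd]; exact hGθint.add hgpart
    have hcd : Continuous (fun x : Fin n → ℝ ↦ fderiv ℝ f x (Pi.single i 1)) := by
      rw [hfd]
      exact (hGcont.comp θ.continuous).add ((continuous_apply i).mul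
        ((hg.continuous.comp θ.continuous).mul (Pd i θ).continuous))
    have h0 := integral_pderiv_eq_zero f (Pi.single i 1)
      (fun x ↦ (hder x).differentiableAt) hcd hintf hintd
    rw [hfd, integral_add hGθint hgpart] at h0
    exact h0
  -- rewrite the nonlinear term using the PDE
  have hsum : ∀ i : Fin n, (∫ x : Fin n → ℝ, x i * (g (θ x) * Pd i θ x))
      = ∑ j, ∫ x : Fin n → ℝ, x i * (Pd i θ x * Pd j (Pd j θ) x) := by
    intro i
    rw [← integral_finset_sum _ (fun j _ ↦ intg1 i (Pd i θ) (Pd j (Pd j θ)))]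
    congr 1
    funext x
    rw [hPDE x, Finset.sum_mul, Finset.mul_sum]
    exact Finset.sum_congr rfl fun j _ ↦ by ring
  -- evaluate using step2
  have hstep2' : ∀ i : Fin n, (∑ j, ∫ x : Fin n → ℝ, x i * (Pd i θ x * Pd j (Pd j θ) x))
      = -(∫ x : Fin n → ℝ, Pd i θ x * Pd i θ x)
        + (1/2) * ∑ j, ∫ x : Fin n → ℝ, Pd j θ x * Pd j θ x := by
    intro i
    rw [Finset.sum_congr rfl (fun j (_ : j ∈ Finset.univ) ↦ step2 θ i j)]
    rw [Finset.sum_add_distrib, Finset.sum_ite_eq Finset.univ i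
      (fun j ↦ -(∫ x : Fin n → ℝ, Pd j θ x * Pd j θ x))]
    rw [← Finset.mul_sum]
    simp
  -- assemble
  have key : ∀ i : Fin n, (∫ x : Fin n → ℝ, G (θ x))
      - (∫ x : Fin n → ℝ, Pd i θ x * Pd i θ x)
      + (1/2) * ∑ j, ∫ x : Fin n → ℝ, Pd j θ x * Pd j θ x = 0 := by
    intro i
    have h := step3 i
    rw [hsum i, hstep2' i] at h
    linarith [h]
  have hsumkey : ∑ i : Fin n, ((∫ x : Fin n → ℝ, G (θ x))
      - (∫ x : Fin n → ℝ, Pd i θ x * Pd i θ x)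
      + (1/2) * ∑ j, ∫ x : Fin n → ℝ, Pd j θ x * Pd j θ x) = 0 :=
    Finset.sum_eq_zero fun i _ ↦ key i
  rw [Finset.sum_add_distrib, Finset.sum_sub_distrib, Finset.sum_const, Finset.sum_const,
    Finset.card_univ, Fintype.card_fin, nsmul_eq_mul, nsmul_eq_mul] at hsumkey
  -- rewrite the goal
  have hgoal1 : (∫ x : Fin n → ℝ, ∑ j : Fin n, (pderiv' j (⇑θ) x)^2)
      = ∑ j, ∫ x : Fin n → ℝ, Pd j θ x * Pd j θ x := by
    have hco : ∀ j : Fin n, (fun x : Fin n → ℝ ↦ (pderiv' j (⇑θ) x)^2)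
        = fun x ↦ Pd j θ x * Pd j θ x := by
      intro j; funext x; rw [pow_two]; rfl
    have hint : ∀ j : Fin n, Integrable (fun x : Fin n → ℝ ↦ (pderiv' j (⇑θ) x)^2) volume := by
      intro j; rw [hco j]; exact (mulS (Pd j θ) (Pd j θ)).integrable
    rw [integral_finset_sum _ (fun j _ ↦ hint j)]
    exact Finset.sum_congr rfl fun j _ ↦ by rw [hco j]
  rw [hgoal1]
  linear_combination -hsumkey
end

section
/- Let n ≥ 3 and let θ : ℝ^n → ℝ be a nonconstant Schwartz-class solution of -Δθ + g(θ) = 0. For λ > 0 set θ_λ(x) = θ(λx). Then the function λ ↦ E(θ_λ) equals λ^{2-n} K + λ^{-n} V with K = (1/2)∫|∇θ|² dx and V = ∫G(θ) dx, its first derivative at λ = 1 vanishes, and its second derivative at λ = 1 equals 2(2-n)K, which is strictly negative. -/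
open MeasureTheory

/-- Energy functional `E(ψ) = ∫ (|∇ψ|²/2 + G(ψ))`. -/
noncomputable def energy' (n : ℕ) (G : ℝ → ℝ) (ψ : (Fin n → ℝ) → ℝ) : ℝ :=
  ∫ x : Fin n → ℝ, ((∑ j : Fin n, (pderiv' j ψ x)^2) / 2 + G (ψ x))

set_option maxHeartbeats 1600000

/-- For `n ≥ 3` and a nonconstant Schwartz-class solution `θ` of
`-Δθ + g(θ) = 0`, setting `θ_λ(x) = θ(λx)`, the function `λ ↦ E(θ_λ)` equals
`λ^{2-n} K + λ^{-n} V` for `λ > 0`, its first derivative at `λ = 1` vanishes, and its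
second derivative at `λ = 1` equals `2(2-n)K < 0`. -/
theorem stmt_1 (n : ℕ) (hn : 3 ≤ n)
    (g : ℝ → ℝ) (hg : ContDiff ℝ (⊤ : ℕ∞) g) (hg0 : g 0 = 0)
    (G : ℝ → ℝ) (hG : ∀ s, G s = ∫ t in (0:ℝ)..s, g t)
    (θ : SchwartzMap (Fin n → ℝ) ℝ)
    (hθnc : ∃ x y, θ x ≠ θ y)
    (hθ : ∀ x, -laplacian' (⇑θ) x + g (θ x) = 0)
    (K V : ℝ)
    (hK : K = (1/2) * ∫ x : Fin n → ℝ, ∑ j : Fin n, (pderiv' j (⇑θ) x)^2)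
    (hV : V = ∫ x : Fin n → ℝ, G (θ x)) :
    (∀ lam : ℝ, 0 < lam →
        energy' n G (fun x => θ (lam • x))
          = lam ^ ((2 : ℤ) - n) * K + lam ^ (-(n : ℤ)) * V)
    ∧ deriv (fun lam : ℝ => energy' n G (fun x => θ (lam • x))) 1 = 0
    ∧ deriv (deriv (fun lam : ℝ => energy' n G (fun x => θ (lam • x)))) 1
        = 2 * ((2 : ℝ) - n) * K
    ∧ 2 * ((2 : ℝ) - n) * K < 0 := by
  classical
  obtain ⟨x₀, y₀, hxy₀⟩ := hθnc
  have hθd : Differentiable ℝ (⇑θ) := θ.differentiable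
  have hd2 : Differentiable ℝ (fderiv ℝ (⇑θ)) :=
    (ContDiff.fderiv_right θ.smooth' (m := 1) (by norm_cast)).differentiable one_ne_zero
  set e : Fin n → (Fin n → ℝ) := fun j => Pi.single j 1 with he
  set D : Fin n → SchwartzMap (Fin n → ℝ) ℝ := fun j => LineDeriv.lineDerivOpCLM ℝ (SchwartzMap (Fin n → ℝ) ℝ) (e j) θ
    with hDdef
  have hD : ∀ j x, D j x = fderiv ℝ (⇑θ) x (e j) := fun j x => rfl
  set D2 : Fin n → Fin n → SchwartzMap (Fin n → ℝ) ℝ :=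
    fun j k => LineDeriv.lineDerivOpCLM ℝ (SchwartzMap (Fin n → ℝ) ℝ) (e j) (D k) with hD2def
  have hD2 : ∀ j k x, D2 j k x = fderiv ℝ (⇑(D k)) x (e j) := fun j k x => rfl
  set Mc : Fin n → SchwartzMap (Fin n → ℝ) ℝ → SchwartzMap (Fin n → ℝ) ℝ := fun k φ =>
    SchwartzMap.bilinLeftCLM (ContinuousLinearMap.mul ℝ ℝ)
      (ContinuousLinearMap.proj k : (Fin n → ℝ) →L[ℝ] ℝ).hasTemperateGrowth φ with hMcdef
  have hMc : ∀ k φ x, Mc k φ x = φ x * x k := fun k φ x => rfl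
  -- integrability helpers
  have hbdd : ∀ φ : SchwartzMap (Fin n → ℝ) ℝ, ∃ C, ∀ x, ‖φ x‖ ≤ C :=
    fun φ => ⟨_, fun x => φ.norm_le_seminorm ℝ x⟩
  have hint_bdd_mul : ∀ (h : (Fin n → ℝ) → ℝ) (φ : SchwartzMap (Fin n → ℝ) ℝ),
      AEStronglyMeasurable h (volume : Measure (Fin n → ℝ)) → (∃ C, ∀ x, ‖h x‖ ≤ C) →
      Integrable (fun x => h x * φ x) (volume : Measure (Fin n → ℝ)) :=
    fun h φ hm ⟨C, hC⟩ => φ.integrable.bdd_mul hm (Filter.Eventually.of_forall hC)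
  have hintDD : ∀ (φ ψ : SchwartzMap (Fin n → ℝ) ℝ),
      Integrable (fun x => φ x * ψ x) (volume : Measure (Fin n → ℝ)) :=
    fun φ ψ => hint_bdd_mul _ ψ φ.continuous.aestronglyMeasurable (hbdd φ)
  -- facts about G
  have hgc : Continuous g := hg.continuous
  have hGd : ∀ s, HasDerivAt G (g s) s := by
    intro s
    have h1 : HasDerivAt (fun u => ∫ t in (0:ℝ)..u, g t) (g s) s :=
      intervalIntegral.integral_hasDerivAt_right (hgc.intervalIntegrable _ _)
        (hgc.stronglyMeasurableAtFilter _ _) hgc.continuousAt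
    exact h1.congr_of_eventuallyEq (Filter.Eventually.of_forall hG)
  have hGc : Continuous G := by
    rw [continuous_iff_continuousAt]; exact fun s => (hGd s).continuousAt
  obtain ⟨Mb, hMb⟩ : ∃ C, ∀ x, ‖θ x‖ ≤ C := hbdd θ
  have hMb0 : 0 ≤ Mb := le_trans (norm_nonneg _) (hMb 0)
  obtain ⟨Cg, hCg⟩ : ∃ C, ∀ s ∈ Set.Icc (-Mb) Mb, ‖g s‖ ≤ C :=
    isCompact_Icc.exists_bound_of_continuousOn hgc.continuousOn
  have hCg0 : 0 ≤ Cg := le_trans (norm_nonneg _) (hCg 0 ⟨neg_nonpos.2 hMb0, hMb0⟩)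
  have hθmem : ∀ x, θ x ∈ Set.Icc (-Mb) Mb := by
    intro x
    beta_reduce
    have := hMb x
    rw [Real.norm_eq_abs, abs_le] at this
    exact ⟨this.1, this.2⟩
  have hgb : ∀ x, ‖g (θ x)‖ ≤ Cg := fun x => hCg _ (hθmem x)
  have hGb : ∀ x, ‖G (θ x)‖ ≤ Cg * ‖θ x‖ := by
    intro x
    beta_reduce
    rw [hG (θ x)]
    have h1 : ∀ t ∈ Set.uIoc (0:ℝ) (θ x), ‖g t‖ ≤ Cg := by
      intro t ht
      obtain ⟨h2, h3⟩ := hθmem x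
      apply hCg
      constructor
      · have : -Mb ≤ min 0 (θ x) := le_min (neg_nonpos.2 hMb0) h2
        linarith [ht.1]
      · have : max 0 (θ x) ≤ Mb := max_le hMb0 h3
        linarith [ht.2]
    calc ‖∫ t in (0:ℝ)..(θ x), g t‖ ≤ Cg * |θ x - 0| :=
          intervalIntegral.norm_integral_le_of_norm_le_const h1
      _ = Cg * ‖θ x‖ := by rw [sub_zero, Real.norm_eq_abs]
  have hGθint : Integrable (fun x => G (θ x)) (volume : Measure (Fin n → ℝ)) := by
    apply Integrable.mono' (θ.integrable.norm.const_mul Cg)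
      ((hGc.comp θ.continuous).aestronglyMeasurable)
    exact Filter.Eventually.of_forall hGb
  have hGθkint : ∀ k : Fin n, Integrable (fun x : Fin n → ℝ => x k * G (θ x))
      (volume : Measure (Fin n → ℝ)) := by
    intro k
    apply Integrable.mono' ((Mc k θ).integrable.norm.const_mul Cg)
      (((continuous_apply k).mul (hGc.comp θ.continuous)).aestronglyMeasurable)
    apply Filter.Eventually.of_forall
    intro x
    beta_reduce
    have h1 : ‖Mc k θ x‖ = ‖θ x‖ * ‖x k‖ := by rw [hMc]; exact norm_mul _ _
    calc ‖x k * G (θ x)‖ = ‖G (θ x)‖ * ‖x k‖ := by rw [norm_mul, mul_comm]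
      _ ≤ (Cg * ‖θ x‖) * ‖x k‖ := by
          apply mul_le_mul_of_nonneg_right (hGb x) (norm_nonneg _)
      _ = Cg * ‖Mc k θ x‖ := by rw [h1]; ring
  -- chain rule for G ∘ θ
  have hGθd : ∀ x, HasFDerivAt (fun y => G (θ y)) (g (θ x) • fderiv ℝ (⇑θ) x) x :=
    fun x => (hGd (θ x)).comp_hasFDerivAt x (hθd x).hasFDerivAt
  have hGθdiff : Differentiable ℝ (fun y => G (θ y)) := fun x => (hGθd x).differentiableAt
  have hfderivGθ : ∀ x v, fderiv ℝ (fun y => G (θ y)) x v = g (θ x) * fderiv ℝ (⇑θ) x v := by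
    intro x v
    rw [(hGθd x).fderiv]
    rfl
  -- coordinate projections
  have hproj : ∀ (k : Fin n), Differentiable ℝ (fun y : Fin n → ℝ => y k) :=
    fun k => (ContinuousLinearMap.proj k : (Fin n → ℝ) →L[ℝ] ℝ).differentiable
  have hprojf : ∀ (k : Fin n) (x v : Fin n → ℝ), fderiv ℝ (fun y : Fin n → ℝ => y k) x v = v k := by
    intro k x v
    have : fderiv ℝ (⇑(ContinuousLinearMap.proj k : (Fin n → ℝ) →L[ℝ] ℝ)) x
        = (ContinuousLinearMap.proj k : (Fin n → ℝ) →L[ℝ] ℝ) :=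
      ContinuousLinearMap.fderiv _
    rw [show (fun y : Fin n → ℝ => y k)
        = ⇑(ContinuousLinearMap.proj k : (Fin n → ℝ) →L[ℝ] ℝ) from rfl, this]
    rfl
  have hek : ∀ j k : Fin n, (e j) k = if j = k then (1:ℝ) else 0 := by
    intro j k
    rcases eq_or_ne j k with h | h
    · subst h; simp [he]
    · simp [he, Pi.single_eq_of_ne (Ne.symm h), h]
  -- symmetry of second derivatives
  have hD2' : ∀ j k x, D2 j k x = fderiv ℝ (fderiv ℝ (⇑θ)) x (e j) (e k) := by
    intro j k x
    rw [hD2 j k x]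
    rw [show ⇑(D k) = fun y => fderiv ℝ (⇑θ) y (e k) from rfl]
    rw [fderiv_clm_apply (hd2 x) (differentiableAt_const (e k))]
    simp
  have hsymm : ∀ j k x, D2 j k x = D2 k j x := by
    intro j k x
    rw [hD2', hD2']
    exact ((θ.smooth 2).contDiffAt.isSymmSndFDerivAt (n := 2) (by simp) (x := x)) (e j) (e k)
  -- the PDE
  have hDfun : ∀ j, ⇑(D j) = pderiv' j (⇑θ) := fun j => funext fun x => rfl
  have hPDE : ∀ x, g (θ x) = ∑ j, D2 j j x := by
    intro x
    beta_reduce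
    have h1 := hθ x
    have h2 : laplacian' (⇑θ) x = ∑ j, D2 j j x := by
      unfold laplacian'
      apply Finset.sum_congr rfl
      intro j _
      rw [hD2, hDfun]
      rfl
    rw [h2] at h1
    linarith
  -- derivative of products with coordinates
  have hMcD : ∀ (k : Fin n) (φ : SchwartzMap (Fin n → ℝ) ℝ) (x : Fin n → ℝ),
      HasFDerivAt (⇑(Mc k φ))
        (φ x • (ContinuousLinearMap.proj k : (Fin n → ℝ) →L[ℝ] ℝ) + x k • fderiv ℝ (⇑φ) x) x := by
    intro k φ x
    have h1 : HasFDerivAt (fun y : Fin n → ℝ => φ y * y k)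
        (φ x • (ContinuousLinearMap.proj k : (Fin n → ℝ) →L[ℝ] ℝ) + x k • fderiv ℝ (⇑φ) x) x :=
      (φ.differentiableAt.hasFDerivAt).mul
        (ContinuousLinearMap.proj k : (Fin n → ℝ) →L[ℝ] ℝ).hasFDerivAt
    exact h1
  have hfderivMc : ∀ (k : Fin n) (φ : SchwartzMap (Fin n → ℝ) ℝ) (x v : Fin n → ℝ),
      fderiv ℝ (⇑(Mc k φ)) x v = φ x * v k + x k * fderiv ℝ (⇑φ) x v := by
    intro k φ x v
    rw [(hMcD k φ x).fderiv]
    rfl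
  -- square function derivative
  have hsqd : ∀ (j : Fin n) (x : Fin n → ℝ),
      HasFDerivAt (fun y => D j y * D j y) ((2 * D j x) • fderiv ℝ (⇑(D j)) x) x := by
    intro j x
    have h1 : HasFDerivAt (fun y => D j y * D j y) _ x := ((D j).differentiableAt.hasFDerivAt (x := x)).mul
      ((D j).differentiableAt.hasFDerivAt (x := x))
    exact h1.congr_fderiv (by rw [two_mul, add_smul])
  have hfderivsq : ∀ (j : Fin n) (x v : Fin n → ℝ),
      fderiv ℝ (fun y => D j y * D j y) x v = 2 * (D j x * fderiv ℝ (⇑(D j)) x v) := by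
    intro j x v
    rw [(hsqd j x).fderiv]
    simp [mul_assoc]
  ---------------------------------------------------------------------------
  -- STEP 1 : ∫ xₖ g(θ) ∂ₖθ = -V
  ---------------------------------------------------------------------------
  have hstep1 : ∀ k : Fin n,
      (∫ x : Fin n → ℝ, x k * (g (θ x) * D k x)) = - V := by
    intro k
    have hintA : Integrable (fun x : Fin n → ℝ =>
        fderiv ℝ (fun y : Fin n → ℝ => y k) x (e k) * G (θ x)) (volume : Measure (Fin n → ℝ)) := by
      apply hGθint.congr
      apply Filter.Eventually.of_forall
      intro x
      simp only []
      rw [hprojf, hek]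
      simp
    have hintB : Integrable (fun x : Fin n → ℝ =>
        x k * fderiv ℝ (fun y => G (θ y)) x (e k)) (volume : Measure (Fin n → ℝ)) := by
      have hbase : Integrable (fun x : Fin n → ℝ => g (θ x) * (Mc k (D k)) x)
          (volume : Measure (Fin n → ℝ)) :=
        hint_bdd_mul _ _ ((hgc.comp θ.continuous).aestronglyMeasurable) ⟨Cg, hgb⟩
      apply hbase.congr
      apply Filter.Eventually.of_forall
      intro x
      simp only []
      rw [hfderivGθ, hMc, hD]
      ring
    have hintC : Integrable (fun x : Fin n → ℝ => x k * G (θ x))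
        (volume : Measure (Fin n → ℝ)) := hGθkint k
    have h := integral_mul_fderiv_eq_neg_fderiv_mul_of_integrable
      (μ := (volume : Measure (Fin n → ℝ))) (f := fun y : Fin n → ℝ => y k)
      (g := fun y => G (θ y)) (v := e k) hintA hintB hintC (fun x _ => hproj k x) (fun x _ => hGθdiff x)
    calc (∫ x : Fin n → ℝ, x k * (g (θ x) * D k x))
        = ∫ x : Fin n → ℝ, x k * fderiv ℝ (fun y => G (θ y)) x (e k) := by
          apply integral_congr_ae
          apply Filter.Eventually.of_forall
          intro x
          simp only []
          rw [hfderivGθ, hD]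
      _ = - ∫ x : Fin n → ℝ, fderiv ℝ (fun y : Fin n → ℝ => y k) x (e k) * G (θ x) := h
      _ = - V := by
          rw [hV]
          congr 1
          apply integral_congr_ae
          apply Filter.Eventually.of_forall
          intro x
          simp only []
          rw [hprojf, hek]
          simp
  ---------------------------------------------------------------------------
  -- STEP 3 : IBP for ∫ (xₖ ∂ₖθ) ∂ⱼ∂ⱼθ
  ---------------------------------------------------------------------------
  have hstep3 : ∀ j k : Fin n,
      (∫ x : Fin n → ℝ, (Mc k (D k)) x * D2 j j x)
        = - ∫ x : Fin n → ℝ, (D k x * (e j) k + x k * D2 j k x) * D j x := by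
    intro j k
    have hintA : Integrable (fun x : Fin n → ℝ =>
        fderiv ℝ (⇑(Mc k (D k))) x (e j) * D j x) (volume : Measure (Fin n → ℝ)) := by
      have h1 : Integrable (fun x : Fin n → ℝ => (e j) k * (D k x * D j x))
          (volume : Measure (Fin n → ℝ)) := (hintDD (D k) (D j)).const_mul _
      have h2 : Integrable (fun x : Fin n → ℝ => (Mc k (D2 j k)) x * D j x)
          (volume : Measure (Fin n → ℝ)) := hintDD _ _
      apply (h1.add h2).congr
      apply Filter.Eventually.of_forall
      intro x
      simp only [Pi.add_apply]
      rw [hfderivMc, hMc, hD2]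
      ring
    have hintB : Integrable (fun x : Fin n → ℝ =>
        (Mc k (D k)) x * fderiv ℝ (⇑(D j)) x (e j)) (volume : Measure (Fin n → ℝ)) :=
      (hintDD (Mc k (D k)) (D2 j j)).congr
        (Filter.Eventually.of_forall fun x => by simp only []; rw [hD2])
    have hintC : Integrable (fun x : Fin n → ℝ => (Mc k (D k)) x * D j x)
        (volume : Measure (Fin n → ℝ)) := hintDD _ _
    have h := integral_mul_fderiv_eq_neg_fderiv_mul_of_integrable
      (μ := (volume : Measure (Fin n → ℝ))) (f := ⇑(Mc k (D k)))
      (g := ⇑(D j)) (v := e j) hintA hintB hintC (fun x _ => (Mc k (D k)).differentiable x) (fun x _ => (D j).differentiable x)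
    calc (∫ x : Fin n → ℝ, (Mc k (D k)) x * D2 j j x)
        = ∫ x : Fin n → ℝ, (Mc k (D k)) x * fderiv ℝ (⇑(D j)) x (e j) := by
          apply integral_congr_ae
          apply Filter.Eventually.of_forall
          intro x
          simp only []
          rw [hD2]
      _ = - ∫ x : Fin n → ℝ, fderiv ℝ (⇑(Mc k (D k))) x (e j) * D j x := h
      _ = - ∫ x : Fin n → ℝ, (D k x * (e j) k + x k * D2 j k x) * D j x := by
          congr 1
          apply integral_congr_ae
          apply Filter.Eventually.of_forall
          intro x
          simp only []
          rw [hfderivMc, hD2]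
  ---------------------------------------------------------------------------
  -- STEP 5 : ∫ xₖ ∂ₖ(∂ⱼθ)·∂ⱼθ = -(1/2)∫ (∂ⱼθ)²
  ---------------------------------------------------------------------------
  have hstep5 : ∀ j k : Fin n,
      (∫ x : Fin n → ℝ, x k * (D j x * D2 k j x))
        = - (∫ x : Fin n → ℝ, D j x * D j x) / 2 := by
    intro j k
    have hintA : Integrable (fun x : Fin n → ℝ =>
        fderiv ℝ (fun y : Fin n → ℝ => y k) x (e k) * (D j x * D j x))
        (volume : Measure (Fin n → ℝ)) := by
      have h1 : Integrable (fun x : Fin n → ℝ => (e k) k * (D j x * D j x))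
          (volume : Measure (Fin n → ℝ)) := (hintDD (D j) (D j)).const_mul _
      apply h1.congr
      apply Filter.Eventually.of_forall
      intro x
      simp only []
      rw [hprojf]
    have hintB : Integrable (fun x : Fin n → ℝ =>
        x k * fderiv ℝ (fun y => D j y * D j y) x (e k)) (volume : Measure (Fin n → ℝ)) := by
      have hbase : Integrable (fun x : Fin n → ℝ => D j x * (Mc k (D2 k j)) x)
          (volume : Measure (Fin n → ℝ)) := hintDD _ _
      apply (hbase.const_mul 2).congr
      apply Filter.Eventually.of_forall
      intro x
      simp only []
      rw [hfderivsq, hMc, hD2]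
      ring
    have hintC : Integrable (fun x : Fin n → ℝ => x k * (D j x * D j x))
        (volume : Measure (Fin n → ℝ)) := by
      have hbase : Integrable (fun x : Fin n → ℝ => D j x * (Mc k (D j)) x)
          (volume : Measure (Fin n → ℝ)) := hintDD _ _
      apply hbase.congr
      apply Filter.Eventually.of_forall
      intro x
      simp only []
      rw [hMc]
      ring
    have hgdiff : Differentiable ℝ (fun y => D j y * D j y) :=
      fun x => (hsqd j x).differentiableAt
    have h := integral_mul_fderiv_eq_neg_fderiv_mul_of_integrable
      (μ := (volume : Measure (Fin n → ℝ))) (f := fun y : Fin n → ℝ => y k)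
      (g := fun y => D j y * D j y) (v := e k) hintA hintB hintC (fun x _ => hproj k x) (fun x _ => hgdiff x)
    have h2 : (∫ x : Fin n → ℝ, x k * fderiv ℝ (fun y => D j y * D j y) x (e k))
        = 2 * ∫ x : Fin n → ℝ, x k * (D j x * D2 k j x) := by
      rw [← integral_const_mul]
      apply integral_congr_ae
      apply Filter.Eventually.of_forall
      intro x
      simp only []
      rw [hfderivsq, hD2]
      ring
    have h3 : (∫ x : Fin n → ℝ, fderiv ℝ (fun y : Fin n → ℝ => y k) x (e k) * (D j x * D j x))
        = ∫ x : Fin n → ℝ, D j x * D j x := by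
      apply integral_congr_ae
      apply Filter.Eventually.of_forall
      intro x
      simp only []
      rw [hprojf, hek]
      simp
    rw [h2, h3] at h
    linarith
  ---------------------------------------------------------------------------
  -- Pohozaev identity : n V = (2 - n) K
  ---------------------------------------------------------------------------
  have hIQ : (∫ x : Fin n → ℝ, ∑ j, (D j x)^2) = 2 * K := by
    have h1 : (fun x : Fin n → ℝ => ∑ j, (D j x)^2)
        = fun x : Fin n → ℝ => ∑ j : Fin n, (pderiv' j (⇑θ) x)^2 := by
      funext x
      apply Finset.sum_congr rfl
      intro j _
      rw [hDfun]
    rw [show (∫ x : Fin n → ℝ, ∑ j, (D j x)^2)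
        = ∫ x : Fin n → ℝ, ∑ j : Fin n, (pderiv' j (⇑θ) x)^2 from by rw [h1], hK]
    ring
  have hIQsum : (∫ x : Fin n → ℝ, ∑ j, (D j x)^2) = ∑ j, ∫ x : Fin n → ℝ, D j x * D j x := by
    have h1 : (∫ x : Fin n → ℝ, ∑ j, (D j x)^2)
        = ∑ j, ∫ x : Fin n → ℝ, (D j x)^2 := by
      apply integral_finset_sum
      intro j _
      exact (hintDD (D j) (D j)).congr
        (Filter.Eventually.of_forall fun x => (pow_two (D j x)).symm)
    rw [h1]
    congr 1
    funext j
    apply integral_congr_ae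
    exact Filter.Eventually.of_forall fun x => pow_two (D j x)
  have hS2K : (∑ j : Fin n, ∫ x : Fin n → ℝ, D j x * D j x) = 2 * K := by
    rw [← hIQsum, hIQ]
  have hperk : ∀ k : Fin n, - V
      = - (∫ x : Fin n → ℝ, D k x * D k x)
        + (∑ j : Fin n, ∫ x : Fin n → ℝ, D j x * D j x) / 2 := by
    intro k
    have hA : (∫ x : Fin n → ℝ, x k * (g (θ x) * D k x))
        = ∑ j, ∫ x : Fin n → ℝ, (Mc k (D k)) x * D2 j j x := by
      rw [← integral_finset_sum]
      · apply integral_congr_ae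
        apply Filter.Eventually.of_forall
        intro x
        simp only []
        rw [hPDE x, Finset.sum_mul, Finset.mul_sum]
        apply Finset.sum_congr rfl
        intro j _
        rw [hMc]
        ring
      · intro j _
        exact hintDD _ _
    have hB : ∀ j : Fin n, (∫ x : Fin n → ℝ, (Mc k (D k)) x * D2 j j x)
        = - ((e j) k * ∫ x : Fin n → ℝ, D k x * D j x)
          + (∫ x : Fin n → ℝ, D j x * D j x) / 2 := by
      intro j
      rw [hstep3 j k]
      have hsplit : (∫ x : Fin n → ℝ, (D k x * (e j) k + x k * D2 j k x) * D j x)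
          = (e j) k * (∫ x : Fin n → ℝ, D k x * D j x)
            + ∫ x : Fin n → ℝ, x k * (D j x * D2 k j x) := by
        have h1 : Integrable (fun x : Fin n → ℝ => (e j) k * (D k x * D j x))
            (volume : Measure (Fin n → ℝ)) := (hintDD (D k) (D j)).const_mul _
        have h2 : Integrable (fun x : Fin n → ℝ => x k * (D j x * D2 k j x))
            (volume : Measure (Fin n → ℝ)) := by
          have hbase : Integrable (fun x : Fin n → ℝ => D j x * (Mc k (D2 k j)) x)
              (volume : Measure (Fin n → ℝ)) := hintDD _ _
          apply hbase.congr
          apply Filter.Eventually.of_forall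
          intro x
          simp only []
          rw [hMc]
          ring
        rw [← integral_const_mul, ← integral_add h1 h2]
        apply integral_congr_ae
        apply Filter.Eventually.of_forall
        intro x
        simp only []
        rw [hsymm j k x]
        ring
      rw [hsplit, hstep5 j k]
      ring
    have hC : - V = ∑ j, (- ((e j) k * ∫ x : Fin n → ℝ, D k x * D j x)
        + (∫ x : Fin n → ℝ, D j x * D j x) / 2) := by
      rw [← hstep1 k, hA]
      exact Finset.sum_congr rfl fun j _ => hB j
    have hsingle : (∑ j : Fin n, (e j) k * ∫ x : Fin n → ℝ, D k x * D j x)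
        = ∫ x : Fin n → ℝ, D k x * D k x := by
      rw [Finset.sum_eq_single k]
      · rw [hek]; simp
      · intro j _ hj
        rw [hek]
        simp [hj]
      · intro h; exact absurd (Finset.mem_univ k) h
    rw [hC, Finset.sum_add_distrib, ← Finset.sum_div]
    congr 1
    rw [Finset.sum_neg_distrib, hsingle]
  have hPo : (n : ℝ) * V = ((2 : ℝ) - n) * K := by
    have h := Finset.sum_congr rfl
      (fun k (_ : k ∈ (Finset.univ : Finset (Fin n))) => hperk k)
    rw [Finset.sum_const, Finset.sum_add_distrib, Finset.sum_neg_distrib,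
      Finset.sum_const] at h
    simp only [Finset.card_univ, Fintype.card_fin, nsmul_eq_mul] at h
    rw [hS2K] at h
    linarith
  ---------------------------------------------------------------------------
  -- Part 1 : scaling identity
  ---------------------------------------------------------------------------
  have hQint : Integrable (fun x : Fin n → ℝ => ∑ j, (D j x)^2)
      (volume : Measure (Fin n → ℝ)) := by
    apply integrable_finset_sum
    intro j _
    exact (hintDD (D j) (D j)).congr
      (Filter.Eventually.of_forall fun x => (pow_two (D j x)).symm)
  have hpart1 : ∀ lam : ℝ, 0 < lam →
      energy' n G (fun x => θ (lam • x))
        = lam ^ ((2 : ℤ) - n) * K + lam ^ (-(n : ℤ)) * V := by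
    intro lam hlam
    have hlne : lam ≠ 0 := ne_of_gt hlam
    have hscale : ∀ (j : Fin n) (x : Fin n → ℝ),
        pderiv' j (fun y => θ (lam • y)) x = lam * D j (lam • x) := by
      intro j x
      have h1 : HasFDerivAt (fun y : Fin n → ℝ => lam • y)
          (lam • ContinuousLinearMap.id ℝ (Fin n → ℝ)) x :=
        (ContinuousLinearMap.id ℝ (Fin n → ℝ)).hasFDerivAt.const_smul lam
      have h2 : HasFDerivAt (fun y : Fin n → ℝ => θ (lam • y))
          ((fderiv ℝ (⇑θ) (lam • x)).comp (lam • ContinuousLinearMap.id ℝ (Fin n → ℝ))) x :=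
        (hθd (lam • x)).hasFDerivAt.comp x h1
      have h3 : pderiv' j (fun y => θ (lam • y)) x
          = ((fderiv ℝ (⇑θ) (lam • x)).comp
              (lam • ContinuousLinearMap.id ℝ (Fin n → ℝ))) (Pi.single j 1) := by
        rw [pderiv', h2.fderiv]
      rw [h3, hD]
      simp [ContinuousLinearMap.smul_apply, (fderiv ℝ (⇑θ) (lam • x)).map_smul, he]
    have hE1 : energy' n G (fun x => θ (lam • x))
        = ∫ x : Fin n → ℝ,
            (fun y : Fin n → ℝ => (∑ j, (lam * D j y)^2) / 2 + G (θ y)) (lam • x) := by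
      rw [energy']
      apply integral_congr_ae
      apply Filter.Eventually.of_forall
      intro x
      simp only []
      simp only [hscale]
    have hE2 := MeasureTheory.Measure.integral_comp_smul
      (volume : Measure (Fin n → ℝ))
      (fun y : Fin n → ℝ => (∑ j, (lam * D j y)^2) / 2 + G (θ y)) lam
    rw [Module.finrank_fin_fun, smul_eq_mul] at hE2
    have hE3 : (∫ y : Fin n → ℝ, ((∑ j, (lam * D j y)^2) / 2 + G (θ y)))
        = lam^2 * K + V := by
      have h1 : (fun y : Fin n → ℝ => (∑ j, (lam * D j y)^2) / 2 + G (θ y))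
          = fun y => (lam^2 / 2) * (∑ j, (D j y)^2) + G (θ y) := by
        funext y
        congr 1
        rw [Finset.mul_sum, Finset.sum_div]
        apply Finset.sum_congr rfl
        intro j _
        ring
      rw [h1, integral_add (hQint.const_mul _) hGθint, integral_const_mul, hIQ, ← hV]
      ring
    rw [hE1, hE2, hE3]
    rw [abs_of_nonneg (by positivity)]
    have hz1 : lam ^ ((2 : ℤ) - n) = lam ^ 2 * (lam ^ n)⁻¹ := by
      rw [zpow_sub₀ hlne, div_eq_mul_inv]
      norm_cast
    have hz2 : lam ^ (-(n : ℤ)) = (lam ^ n)⁻¹ := by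
      rw [zpow_neg]
      norm_cast
    rw [hz1, hz2]
    ring
  ---------------------------------------------------------------------------
  -- K > 0
  ---------------------------------------------------------------------------
  have hKpos : 0 < K := by
    have hnonneg : ∀ x : Fin n → ℝ, 0 ≤ ∑ j, (D j x)^2 :=
      fun x => Finset.sum_nonneg fun j _ => sq_nonneg _
    have hge : 0 ≤ ∫ x : Fin n → ℝ, ∑ j, (D j x)^2 :=
      integral_nonneg hnonneg
    rcases lt_or_eq_of_le hge with h | h
    · rw [hIQ] at h; linarith
    · exfalso
      have h0 : (fun x : Fin n → ℝ => ∑ j, (D j x)^2) =ᵐ[volume] 0 :=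
        (integral_eq_zero_iff_of_nonneg hnonneg hQint).mp h.symm
      have hcont : Continuous (fun x : Fin n → ℝ => ∑ j, (D j x)^2) :=
        continuous_finset_sum _ fun j _ => ((D j).continuous.pow 2)
      have h00 : (fun x : Fin n → ℝ => ∑ j, (D j x)^2) = 0 :=
        (Continuous.ae_eq_iff_eq volume hcont continuous_zero).mp h0
      have hz : ∀ (x : Fin n → ℝ) (j : Fin n), fderiv ℝ (⇑θ) x (e j) = 0 := by
        intro x j
        have h1 : (∑ j, (D j x)^2) = 0 := by
          have := congrFun h00 x
          simpa using this
        have h2 := (Finset.sum_eq_zero_iff_of_nonneg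
          (fun j (_ : j ∈ Finset.univ) => sq_nonneg (D j x))).mp h1 j (Finset.mem_univ j)
        have h3 : D j x = 0 := by
          have h4 : D j x * D j x = 0 := by rw [← pow_two]; exact h2
          rcases mul_self_eq_zero.mp h4 with h5
          exact h5
        rw [← hD]
        exact h3
      have hzero : ∀ x : Fin n → ℝ, fderiv ℝ (⇑θ) x = 0 := by
        intro x
        ext v
        have hv : v = ∑ j, v j • e j := by
          funext i
          rw [Finset.sum_apply]
          rw [Finset.sum_eq_single i]
          · rw [Pi.smul_apply, hek]
            simp
          · intro j _ hj
            rw [Pi.smul_apply, hek]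
            simp [hj]
          · intro h; exact absurd (Finset.mem_univ i) h
        conv_lhs => rw [hv]
        rw [map_sum]
        simp only [_root_.map_smul, hz x]
        simp
      exact hxy₀ (is_const_of_fderiv_eq_zero hθd hzero x₀ y₀)
  ---------------------------------------------------------------------------
  -- derivatives at 1
  ---------------------------------------------------------------------------
  have hev : (fun lam : ℝ => energy' n G (fun x => θ (lam • x)))
      =ᶠ[nhds 1] (fun lam : ℝ => lam ^ ((2 : ℤ) - n) * K + lam ^ (-(n : ℤ)) * V) := by
    filter_upwards [eventually_gt_nhds zero_lt_one] with lam hlam using hpart1 lam hlam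
  set a : ℤ := 2 - n with ha
  set b : ℤ := -(n : ℤ) with hb
  set ψf : ℝ → ℝ := fun lam =>
    (a : ℝ) * lam ^ (a - 1) * K + (b : ℝ) * lam ^ (b - 1) * V with hψf
  have hφd : ∀ lam : ℝ, lam ≠ 0 →
      HasDerivAt (fun lam : ℝ => lam ^ ((2 : ℤ) - n) * K + lam ^ (-(n : ℤ)) * V)
        (ψf lam) lam := by
    intro lam hl
    exact ((hasDerivAt_zpow a lam (Or.inl hl)).mul_const K).add
      ((hasDerivAt_zpow b lam (Or.inl hl)).mul_const V)
  have hder1 : deriv (fun lam : ℝ => energy' n G (fun x => θ (lam • x))) 1 = 0 := by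
    rw [hev.deriv_eq, (hφd 1 one_ne_zero).deriv, hψf]
    simp only [one_zpow]
    rw [ha, hb]
    push_cast
    linarith [hPo]
  have hψev : deriv (fun lam : ℝ => lam ^ ((2 : ℤ) - n) * K + lam ^ (-(n : ℤ)) * V)
      =ᶠ[nhds 1] ψf := by
    filter_upwards [eventually_ne_nhds one_ne_zero] with lam hl using (hφd lam hl).deriv
  have hder2 : deriv (deriv (fun lam : ℝ => energy' n G (fun x => θ (lam • x)))) 1
      = 2 * ((2 : ℝ) - n) * K := by
    have h1 : deriv (fun lam : ℝ => energy' n G (fun x => θ (lam • x)))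
        =ᶠ[nhds 1] ψf := hev.deriv.trans hψev
    rw [h1.deriv_eq]
    have h2 : HasDerivAt ψf
        ((a : ℝ) * (((a - 1 : ℤ) : ℝ) * (1:ℝ) ^ (a - 1 - 1)) * K
          + (b : ℝ) * (((b - 1 : ℤ) : ℝ) * (1:ℝ) ^ (b - 1 - 1)) * V) 1 := by
      rw [hψf]
      exact (((hasDerivAt_zpow (a - 1) 1 (Or.inl one_ne_zero)).const_mul
        (a : ℝ)).mul_const K).add
        (((hasDerivAt_zpow (b - 1) 1 (Or.inl one_ne_zero)).const_mul (b : ℝ)).mul_const V)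
    rw [h2.deriv]
    simp only [one_zpow]
    rw [ha, hb]
    push_cast
    nlinarith [hPo]
  refine ⟨hpart1, hder1, hder2, ?_⟩
  have hn3 : (3 : ℝ) ≤ (n : ℝ) := by exact_mod_cast hn
  nlinarith [hKpos]
end
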